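/- arXiv:1702.00622 — 2 statements merged into one kernel-verified Lean document; each statement's English description precedes it below -/
import Mathlib

section
/- Let G be a connected (2K2, K1+C4)-free graph. Then either G is a pseudo-split graph, or there exists a partition (V1, V2, V3, V4, V5, V6) of the vertex set of G such that: (i) V1 induces either a pseudo-split subgraph of G with ω([V1]) ≤ ω(G) − 1, or the complement of a bipartite graph; and (ii) V2, V3, V4, V5, V6 are independent sets; moreover, if V1 induces a pseudo-split graph then V5 and V6 are empty. -/
open SimpleGraph

/-- `G` contains no induced subgraph isomorphic to `H` (graph embeddings are
exactly the inclusions of induced subgraphs). -/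
def IndFree {W V : Type*} (H : SimpleGraph W) (G : SimpleGraph V) : Prop :=
  IsEmpty (H ↪g G)

/-- A set of vertices is independent if its elements are pairwise nonadjacent. -/
def IsIndep {V : Type*} (G : SimpleGraph V) (s : Set V) : Prop :=
  s.Pairwise fun u v => ¬ G.Adj u v

/-- A graph is perfect if every induced subgraph has chromatic number equal to
its clique number. -/
def IsPerfect {V : Type*} (G : SimpleGraph V) : Prop :=
  ∀ S : Set V, (G.induce S).chromaticNumber = ((G.induce S).cliqueNum : ℕ∞)

/-- `2K₂`: two disjoint edges `{0,1}` and `{2,3}`. -/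
def graph2K2 : SimpleGraph (Fin 4) :=
  SimpleGraph.fromRel (fun a b => (a = 0 ∧ b = 1) ∨ (a = 2 ∧ b = 3))

/-- The path `P₄`. -/
def graphP4 : SimpleGraph (Fin 4) :=
  SimpleGraph.fromRel (fun a b => (a = 0 ∧ b = 1) ∨ (a = 1 ∧ b = 2) ∨ (a = 2 ∧ b = 3))

/-- The path `P₃`. -/
def graphP3 : SimpleGraph (Fin 3) :=
  SimpleGraph.fromRel (fun a b => (a = 0 ∧ b = 1) ∨ (a = 1 ∧ b = 2))

/-- `P₄ ∪ K₁`: a path on `{0,1,2,3}` plus the isolated vertex `4`. -/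
def graphP4K1 : SimpleGraph (Fin 5) :=
  SimpleGraph.fromRel (fun a b => (a = 0 ∧ b = 1) ∨ (a = 1 ∧ b = 2) ∨ (a = 2 ∧ b = 3))

/-- The cycle `C₄`. -/
def graphC4 : SimpleGraph (Fin 4) :=
  SimpleGraph.fromRel
    (fun a b => (a = 0 ∧ b = 1) ∨ (a = 1 ∧ b = 2) ∨ (a = 2 ∧ b = 3) ∨ (a = 3 ∧ b = 0))

/-- The gem `K₁ + P₄`: a path on `{0,1,2,3}` plus the universal vertex `4`. -/
def graphGem : SimpleGraph (Fin 5) :=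
  SimpleGraph.fromRel
    (fun a b => (a = 0 ∧ b = 1) ∨ (a = 1 ∧ b = 2) ∨ (a = 2 ∧ b = 3) ∨ (a ≠ 4 ∧ b = 4))

/-- The wheel `K₁ + C₄`: a 4-cycle on `{0,1,2,3}` plus the universal vertex `4`. -/
def graphWheel : SimpleGraph (Fin 5) :=
  SimpleGraph.fromRel
    (fun a b => (a = 0 ∧ b = 1) ∨ (a = 1 ∧ b = 2) ∨ (a = 2 ∧ b = 3) ∨ (a = 3 ∧ b = 0) ∨
      (a ≠ 4 ∧ b = 4))

/-- `P₂ ∪ P₃`: the edge `{0,1}` together with the path `2 - 3 - 4`. -/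
def graphP2P3 : SimpleGraph (Fin 5) :=
  SimpleGraph.fromRel (fun a b => (a = 0 ∧ b = 1) ∨ (a = 2 ∧ b = 3) ∨ (a = 3 ∧ b = 4))

/-- `P₂ ∪ P₄`: the edge `{0,1}` together with the path `2 - 3 - 4 - 5`. -/
def graphP2P4 : SimpleGraph (Fin 6) :=
  SimpleGraph.fromRel
    (fun a b => (a = 0 ∧ b = 1) ∨ (a = 2 ∧ b = 3) ∨ (a = 3 ∧ b = 4) ∨ (a = 4 ∧ b = 5))

/-- `HVN`: `K₄` on `{0,1,2,3}` plus a vertex `4` adjacent to exactly `0` and `1`. -/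
def graphHVN : SimpleGraph (Fin 5) :=
  SimpleGraph.fromRel (fun a b => (a < 4 ∧ b < 4) ∨ (a = 4 ∧ (b = 0 ∨ b = 1)))

/-- `K₅ - e`: the complete graph on 5 vertices minus the edge `{0,1}`. -/
def graphK5e : SimpleGraph (Fin 5) :=
  SimpleGraph.fromRel (fun a b => ¬((a = 0 ∧ b = 1) ∨ (a = 1 ∧ b = 0)))

/-- The diamond `K₄ - e`: the complete graph on 4 vertices minus the edge `{0,2}`. -/
def graphDiamond : SimpleGraph (Fin 4) :=
  SimpleGraph.fromRel (fun a b => ¬((a = 0 ∧ b = 2) ∨ (a = 2 ∧ b = 0)))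

/-- The paw: a triangle `{0,1,2}` plus a pendant vertex `3` adjacent to `0`. -/
def graphPaw : SimpleGraph (Fin 4) :=
  SimpleGraph.fromRel
    (fun a b => (a = 0 ∧ b = 1) ∨ (a = 1 ∧ b = 2) ∨ (a = 0 ∧ b = 2) ∨ (a = 0 ∧ b = 3))

/-- `K₅`. -/
def graphK5 : SimpleGraph (Fin 5) := ⊤

/-- The join `K₁ + H`: `H` together with a new universal vertex `none`. -/
def joinK1 {W : Type*} (H : SimpleGraph W) : SimpleGraph (Option W) :=
  SimpleGraph.fromRel
    (fun a b => (∃ u v, a = some u ∧ b = some v ∧ H.Adj u v) ∨ a = none)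

/-- A pseudo-split graph is a `(2K₂, C₄)`-free graph. -/
def IsPseudoSplit {V : Type*} (G : SimpleGraph V) : Prop :=
  IndFree graph2K2 G ∧ IndFree graphC4 G

/-!
Let `v` lie in a maximum clique `K`. The neighbourhood `N(v)` is `2K₂`-free, is `C₄`-free because
a `C₄` there would form a wheel with `v`, and has clique number below `ω(G)`. The non-neighbours
of `v` span a triangle-free graph: by `2K₂`-freeness every vertex of `K \ {v}` sees two vertices
of such a triangle; two vertices of `K \ {v}` missing different triangle vertices would give a
wheel, and otherwise two triangle vertices would extend `K \ {v}` to a clique larger than `K`.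
If the non-neighbours contain an edge `xy`, they split, together with `v`, into the common
non-neighbours of `x` and `y` (independent by `2K₂`-freeness) and the neighbours of `x`, resp.
of `y` only (independent by triangle-freeness).
-/

section InducedSubgraphs

variable {V : Type*} {G : SimpleGraph V}

lemma adj_cross_of_indFree_graph2K2 (h : IndFree graph2K2 G) {a b c d : V}
    (hab : G.Adj a b) (hcd : G.Adj c d) :
    G.Adj a c ∨ G.Adj a d ∨ G.Adj b c ∨ G.Adj b d := by
  by_contra! hcross
  obtain ⟨hac, had, hbc, hbd⟩ := hcross
  have : a ≠ b := hab.ne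
  have : c ≠ d := hcd.ne
  have : a ≠ c := fun h => had (h ▸ hcd)
  have : a ≠ d := fun h => hac (h ▸ hcd.symm)
  have : b ≠ c := fun h => hbd (h ▸ hcd)
  have : b ≠ d := fun h => hbc (h ▸ hcd.symm)
  refine h.false ⟨⟨![a, b, c, d], fun i j hij => ?_⟩, fun {i j} => ?_⟩
  · fin_cases i <;> fin_cases j <;> simp_all [eq_comm]
  · change G.Adj (![a, b, c, d] i) (![a, b, c, d] j) ↔ graph2K2.Adj i j
    fin_cases i <;> fin_cases j <;> simp_all [graph2K2, G.adj_comm]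

lemma adj_diag_of_indFree_graphWheel (h : IndFree graphWheel G) {a b c d e : V}
    (hab : G.Adj a b) (hbc : G.Adj b c) (hcd : G.Adj c d) (hda : G.Adj d a)
    (hea : G.Adj e a) (heb : G.Adj e b) (hec : G.Adj e c) (hed : G.Adj e d)
    (hac : a ≠ c) (hbd : b ≠ d) : G.Adj a c ∨ G.Adj b d := by
  by_contra! hdiag
  obtain ⟨hac', hbd'⟩ := hdiag
  have : a ≠ b := hab.ne
  have : b ≠ c := hbc.ne
  have : c ≠ d := hcd.ne
  have : d ≠ a := hda.ne
  have : e ≠ a := hea.ne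
  have : e ≠ b := heb.ne
  have : e ≠ c := hec.ne
  have : e ≠ d := hed.ne
  refine h.false ⟨⟨![a, b, c, d, e], fun i j hij => ?_⟩, fun {i j} => ?_⟩
  · fin_cases i <;> fin_cases j <;> simp_all [eq_comm]
  · change G.Adj (![a, b, c, d, e] i) (![a, b, c, d, e] j) ↔ graphWheel.Adj i j
    fin_cases i <;> fin_cases j <;> simp_all [graphWheel, G.adj_comm]

lemma IndFree.induce {W : Type*} {H : SimpleGraph W} (h : IndFree H G) (s : Set V) :
    IndFree H (G.induce s) :=
  ⟨fun f => h.false ((Embedding.induce s).comp f)⟩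

lemma indFree_graphC4_induce_neighborSet (h : IndFree graphWheel G) (v : V) :
    IndFree graphC4 (G.induce (G.neighborSet v)) := by
  refine ⟨fun f => ?_⟩
  set g := (Embedding.induce (G.neighborSet v)).comp f
  have hg : ∀ i j, G.Adj (g i) (g j) ↔ graphC4.Adj i j := fun _ _ => g.map_rel_iff
  have hv : ∀ i, G.Adj v (g i) := fun i => (f i).2
  have := adj_diag_of_indFree_graphWheel h ((hg 0 1).2 (by simp [graphC4]))
    ((hg 1 2).2 (by simp [graphC4])) ((hg 2 3).2 (by simp [graphC4]))
    ((hg 3 0).2 (by simp [graphC4])) (hv 0) (hv 1) (hv 2) (hv 3)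
    (g.injective.ne (by decide)) (g.injective.ne (by decide))
  rw [hg, hg] at this
  simp [graphC4] at this

lemma isPseudoSplit_induce_neighborSet (h₁ : IndFree graph2K2 G) (h₂ : IndFree graphWheel G)
    (v : V) : IsPseudoSplit (G.induce (G.neighborSet v)) :=
  ⟨h₁.induce _, indFree_graphC4_induce_neighborSet h₂ v⟩

lemma isPseudoSplit_of_isEmpty [IsEmpty V] (G : SimpleGraph V) : IsPseudoSplit G :=
  ⟨⟨fun f => isEmptyElim (f 0)⟩, ⟨fun f => isEmptyElim (f 0)⟩⟩

end InducedSubgraphs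

namespace SimpleGraph

variable {V : Type*} {G : SimpleGraph V}

lemma card_lt_cliqueNum_of_subset_neighborSet [Finite V] {s : Finset V} {v : V}
    (hs : G.IsClique (s : Set V)) (hsv : ↑s ⊆ G.neighborSet v) : s.card < G.cliqueNum := by
  classical
  have hv : v ∉ s := fun h => G.irrefl (hsv h)
  have hclique : G.IsClique (insert v s : Finset V) := by
    rw [Finset.coe_insert]
    exact isClique_insert.2 ⟨hs, fun _ hb _ => hsv hb⟩
  calc s.card < (insert v s).card := by rw [Finset.card_insert_of_notMem hv]; omega
    _ ≤ G.cliqueNum := hclique.card_le_cliqueNum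

lemma cliqueNum_induce_neighborSet_lt [Finite V] (v : V) :
    (G.induce (G.neighborSet v)).cliqueNum < G.cliqueNum := by
  obtain ⟨t, ht⟩ := (G.induce (G.neighborSet v)).exists_isNClique_cliqueNum
  rw [isNClique_induce_iff] at ht
  rw [← ht.card_eq]
  exact card_lt_cliqueNum_of_subset_neighborSet ht.isClique (Finset.map_subtype_subset t)

lemma IsMaximumClique.nonempty [Finite V] [Nonempty V] {K : Finset V}
    (hK : G.IsMaximumClique K) : K.Nonempty := by
  obtain ⟨w⟩ := ‹Nonempty V›
  exact Finset.card_pos.1 (by simpa using hK.maximum {w} (by simp))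

lemma IsMaximumClique.not_subset_neighborSet_of_adj [Finite V] [DecidableEq V] {K : Finset V}
    (hK : G.IsMaximumClique K) {v p q : V} (hv : v ∈ K) (hpq : G.Adj p q)
    (hp : ↑(K.erase v) ⊆ G.neighborSet p) : ¬↑(K.erase v) ⊆ G.neighborSet q := by
  intro hq
  have hqK : q ∉ K.erase v := fun h => G.irrefl (hq h)
  have hclique : G.IsClique (insert q (K.erase v) : Finset V) := by
    rw [Finset.coe_insert]
    exact isClique_insert.2
      ⟨hK.isClique.subset (Finset.coe_subset.2 (K.erase_subset v)), fun _ hb _ => hq hb⟩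
  have hsub : ↑(insert q (K.erase v)) ⊆ G.neighborSet p := by
    rw [Finset.coe_insert]
    exact Set.insert_subset hpq hp
  have hlt := card_lt_cliqueNum_of_subset_neighborSet hclique hsub
  rw [Finset.card_insert_of_notMem hqK, Finset.card_erase_of_mem hv,
    maximumClique_card_eq_cliqueNum K hK] at hlt
  have := Finset.card_pos.2 ⟨v, hv⟩
  omega

end SimpleGraph

section IndependentSets

variable {V : Type*} {G : SimpleGraph V}

lemma isIndep_empty : IsIndep G ∅ := Set.pairwise_empty _

lemma IsIndep.mono {s t : Set V} (hs : IsIndep G s) (hts : t ⊆ s) : IsIndep G t :=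
  Set.Pairwise.mono hts hs

lemma isIndep_setOf_not_adj_of_adj (h₁ : IndFree graph2K2 G) {x y : V} (hxy : G.Adj x y) :
    IsIndep G {u | ¬G.Adj x u ∧ ¬G.Adj y u} := by
  intro p hp q hq _ hpq
  rcases adj_cross_of_indFree_graph2K2 h₁ hxy hpq with h | h | h | h
  exacts [hp.1 h, hq.1 h, hp.2 h, hq.2 h]

lemma adj_or_adj_of_compl_adj (h₁ : IndFree graph2K2 G) {v x p q : V} (hx : G.Adj v x)
    (hp : Gᶜ.Adj v p) (hq : Gᶜ.Adj v q) (hpq : G.Adj p q) : G.Adj x p ∨ G.Adj x q := by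
  rcases adj_cross_of_indFree_graph2K2 h₁ hx hpq with h | h | h | h
  exacts [absurd h hp.2, absurd h hq.2, .inl h, .inr h]

lemma subset_neighborSet_or_of_isTriangle (h₁ : IndFree graph2K2 G) (h₂ : IndFree graphWheel G)
    {s : Set V} {v p q r : V} (hs : G.IsClique s) (hsv : s ⊆ G.neighborSet v)
    (hp : Gᶜ.Adj v p) (hq : Gᶜ.Adj v q) (hr : Gᶜ.Adj v r)
    (hpq : G.Adj p q) (hqr : G.Adj q r) (hpr : G.Adj p r) :
    s ⊆ G.neighborSet p ∨ s ⊆ G.neighborSet q := by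
  by_contra! h
  obtain ⟨y, hy, hyp⟩ := Set.not_subset.1 h.1
  obtain ⟨z, hz, hzq⟩ := Set.not_subset.1 h.2
  replace hyp : ¬G.Adj y p := fun h' => hyp h'.symm
  replace hzq : ¬G.Adj z q := fun h' => hzq h'.symm
  have hyq := (adj_or_adj_of_compl_adj h₁ (hsv hy) hp hq hpq).resolve_left hyp
  have hyr := (adj_or_adj_of_compl_adj h₁ (hsv hy) hp hr hpr).resolve_left hyp
  have hzp := (adj_or_adj_of_compl_adj h₁ (hsv hz) hp hq hpq).resolve_right hzq
  have hzr := (adj_or_adj_of_compl_adj h₁ (hsv hz) hq hr hqr).resolve_left hzq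
  have hyz : G.Adj y z := hs hy hz (by rintro rfl; exact hzq hyq)
  -- `y q p z` is an induced 4-cycle, and `r` sees all of it
  have hyp' : y ≠ p := by rintro rfl; exact hp.2 (hsv hy)
  have hqz : q ≠ z := by rintro rfl; exact hq.2 (hsv hz)
  rcases adj_diag_of_indFree_graphWheel h₂ hyq hpq.symm hzp.symm hyz.symm
    hyr.symm hqr.symm hpr.symm hzr.symm hyp' hqz with h | h
  exacts [hyp h, hzq h.symm]

lemma isIndep_neighborSet_diff_neighborSet [Finite V] [DecidableEq V] (h₁ : IndFree graph2K2 G)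
    (h₂ : IndFree graphWheel G) {K : Finset V} (hK : G.IsMaximumClique K) {v x : V}
    (hv : v ∈ K) (hx : Gᶜ.Adj v x) : IsIndep G (G.neighborSet x \ G.neighborSet v) := by
  intro p hp q hq _ hpq
  have hM : ∀ u ∈ G.neighborSet x \ G.neighborSet v, Gᶜ.Adj v u :=
    fun u hu => ⟨by rintro rfl; exact hx.2 hu.1.symm, hu.2⟩
  have hs : G.IsClique (↑(K.erase v) : Set V) :=
    hK.isClique.subset (Finset.coe_subset.2 (K.erase_subset v))
  have hsv : ↑(K.erase v) ⊆ G.neighborSet v := fun u hu =>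
    hK.isClique (Finset.mem_of_mem_erase hu) hv (Finset.ne_of_mem_erase hu) |>.symm
  have hxp : G.Adj x p := hp.1
  have hxq : G.Adj x q := hq.1
  have := subset_neighborSet_or_of_isTriangle h₁ h₂ hs hsv hx (hM p hp) (hM q hq) hxp hpq hxq
  have := subset_neighborSet_or_of_isTriangle h₁ h₂ hs hsv (hM p hp) (hM q hq) hx hpq hxq.symm
    hxp.symm
  have := subset_neighborSet_or_of_isTriangle h₁ h₂ hs hsv hx (hM q hq) (hM p hp) hxq hpq.symm hxp
  -- at least two of `x, p, q` are complete to `K.erase v`, but no two of them are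
  have := hK.not_subset_neighborSet_of_adj hv hxp
  have := hK.not_subset_neighborSet_of_adj hv hxq
  have := hK.not_subset_neighborSet_of_adj hv hpq
  tauto

lemma exists_indep_partition_compl_neighborSet [Finite V] [DecidableEq V]
    (h₁ : IndFree graph2K2 G) (h₂ : IndFree graphWheel G) {K : Finset V}
    (hK : G.IsMaximumClique K) {v : V} (hv : v ∈ K) :
    ∃ A B C : Set V, A ∪ B ∪ C = (G.neighborSet v)ᶜ ∧
      Disjoint A B ∧ Disjoint A C ∧ Disjoint B C ∧ IsIndep G A ∧ IsIndep G B ∧ IsIndep G C := by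
  by_cases hM : IsIndep G (G.neighborSet v)ᶜ
  · exact ⟨_, ∅, ∅, by simp, by simp, by simp, by simp, hM, isIndep_empty, isIndep_empty⟩
  obtain ⟨x, hx, y, hy, -, hxy⟩ : ∃ x ∈ (G.neighborSet v)ᶜ, ∃ y ∈ (G.neighborSet v)ᶜ,
      x ≠ y ∧ G.Adj x y := by
    simpa [IsIndep, Set.Pairwise] using hM
  have hvx : Gᶜ.Adj v x := ⟨by rintro rfl; exact hy hxy, hx⟩
  have hvy : Gᶜ.Adj v y := ⟨by rintro rfl; exact hx hxy.symm, hy⟩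
  refine ⟨(G.neighborSet v)ᶜ ∩ {u | ¬G.Adj x u ∧ ¬G.Adj y u},
    G.neighborSet x \ G.neighborSet v, G.neighborSet y \ (G.neighborSet v ∪ G.neighborSet x),
    ?_, ?_, ?_, ?_, (isIndep_setOf_not_adj_of_adj h₁ hxy).mono Set.inter_subset_right,
    isIndep_neighborSet_diff_neighborSet h₁ h₂ hK hv hvx,
    (isIndep_neighborSet_diff_neighborSet h₁ h₂ hK hv hvy).mono
      (Set.sdiff_subset_sdiff_right Set.subset_union_left)⟩
  · ext u
    simp only [Set.mem_union, Set.mem_inter_iff, Set.mem_compl_iff, Set.mem_ofPred_eq,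
      Set.mem_sdiff, mem_neighborSet]
    tauto
  all_goals
    rw [Set.disjoint_left]
    intro u
    simp only [Set.mem_inter_iff, Set.mem_compl_iff, Set.mem_ofPred_eq, Set.mem_sdiff,
      Set.mem_union, mem_neighborSet]
    tauto

end IndependentSets

theorem stmt2_general {V : Type*} [Fintype V] (G : SimpleGraph V)
    (h1 : IndFree graph2K2 G) (h2 : IndFree graphWheel G) :
    IsPseudoSplit G ∨
      ∃ V1 V2 V3 V4 V5 V6 : Set V,
        V1 ∪ V2 ∪ V3 ∪ V4 ∪ V5 ∪ V6 = (Set.univ : Set V) ∧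
        List.Pairwise Disjoint [V1, V2, V3, V4, V5, V6] ∧
        ((IsPseudoSplit (G.induce V1) ∧ (G.induce V1).cliqueNum ≤ G.cliqueNum - 1) ∨
          ((G.induce V1)ᶜ).Colorable 2) ∧
        IsIndep G V2 ∧ IsIndep G V3 ∧ IsIndep G V4 ∧ IsIndep G V5 ∧ IsIndep G V6 ∧
        (IsPseudoSplit (G.induce V1) → V5 = ∅ ∧ V6 = ∅) := by
  classical
  cases isEmpty_or_nonempty V with
  | inl _ => exact .inl (isPseudoSplit_of_isEmpty G)
  | inr _ =>
  obtain ⟨K, hK⟩ := G.maximumClique_exists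
  obtain ⟨v, hv⟩ := hK.nonempty
  obtain ⟨A, B, C, hcover, hAB, hAC, hBC, hA, hB, hC⟩ :=
    exists_indep_partition_compl_neighborSet h1 h2 hK hv
  have hN : ∀ S ⊆ (G.neighborSet v)ᶜ, Disjoint (G.neighborSet v) S :=
    fun S hS => Set.disjoint_of_subset_right hS disjoint_compl_right
  obtain ⟨⟨hAN, hBN⟩, hCN⟩ : (A ⊆ _ ∧ B ⊆ _) ∧ C ⊆ _ := by
    simpa only [Set.union_subset_iff] using hcover.le
  refine .inr ⟨G.neighborSet v, A, B, C, ∅, ∅, ?_, ?_,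
    .inl ⟨isPseudoSplit_induce_neighborSet h1 h2 v, ?_⟩,
    hA, hB, hC, isIndep_empty, isIndep_empty, fun _ => ⟨rfl, rfl⟩⟩
  · rw [Set.union_empty, Set.union_empty, Set.union_assoc, Set.union_assoc,
      ← Set.union_assoc A, hcover, Set.union_compl_self]
  · simp [List.pairwise_cons, hAB, hAC, hBC, hN _ hAN, hN _ hBN, hN _ hCN]
  · have := G.cliqueNum_induce_neighborSet_lt v
    omega

/-- Structure of connected `(2K₂, K₁ + C₄)`-free graphs. -/
theorem stmt2 {V : Type*} [Fintype V] (G : SimpleGraph V)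
    (hconn : G.Connected) (h1 : IndFree graph2K2 G) (h2 : IndFree graphWheel G) :
    IsPseudoSplit G ∨
      ∃ V1 V2 V3 V4 V5 V6 : Set V,
        V1 ∪ V2 ∪ V3 ∪ V4 ∪ V5 ∪ V6 = (Set.univ : Set V) ∧
        List.Pairwise Disjoint [V1, V2, V3, V4, V5, V6] ∧
        ((IsPseudoSplit (G.induce V1) ∧ (G.induce V1).cliqueNum ≤ G.cliqueNum - 1) ∨
          ((G.induce V1)ᶜ).Colorable 2) ∧
        IsIndep G V2 ∧ IsIndep G V3 ∧ IsIndep G V4 ∧ IsIndep G V5 ∧ IsIndep G V6 ∧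
        (IsPseudoSplit (G.induce V1) → V5 = ∅ ∧ V6 = ∅) :=
  stmt2_general G h1 h2
end

section
/- Let G be a (2K2, K5 − e)-free graph. Then χ(G) ≤ ω(G) + 4. -/
open SimpleGraph

/-!
Fix a maximum clique `Q = {q₀, …, q_{ω-1}}` and colour `qᵢ` with `i`. Every other vertex `u`
sees at most two vertices of `Q`: it misses some `qⱼ` by maximality, and three common neighbours
of `u` and `qⱼ` in `Q` would span a `K₅ - e`. For adjacent `u, w` outside `Q`, `2K₂`-freeness
lets `u` and `w` miss at most one vertex of `Q` together, while `u`, `w` and their common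
neighbours in `Q` form a clique, so at most `ω - 2` of those exist. A vertex outside `Q` is then
coloured according to its trace on `Q`: when `ω ≥ 6` two traces of size at most two cannot cover
`ω - 1` vertices, so `V ∖ Q` is independent and needs one new colour; when `ω ≤ 5` an explicit
table, checked by computation, colours the possible traces with `ω + 4` colours.
-/

open Finset

section TraceColoring

variable {V : Type*} {G : SimpleGraph V}

lemma IndFree.false_of_graph2K2 (h : IndFree graph2K2 G) {a b c d : V}
    (hab : G.Adj a b) (hcd : G.Adj c d)
    (hac : ¬G.Adj a c) (had : ¬G.Adj a d) (hbc : ¬G.Adj b c) (hbd : ¬G.Adj b d) : False := by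
  have hac' : a ≠ c := fun h => had (h ▸ hcd)
  have had' : a ≠ d := fun h => hac (h ▸ hcd.symm)
  have hbc' : b ≠ c := fun h => hbd (h ▸ hcd)
  have hbd' : b ≠ d := fun h => hbc (h ▸ hcd.symm)
  refine h.elim ⟨⟨![a, b, c, d], ?_⟩, ?_⟩
  · intro i j hij
    fin_cases i <;> fin_cases j <;>
      simp_all [hab.ne, hcd.ne, hab.ne', hcd.ne', hac'.symm, had'.symm, hbc'.symm, hbd'.symm]
  · intro i j
    change G.Adj (![a, b, c, d] i) (![a, b, c, d] j) ↔ _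
    fin_cases i <;> fin_cases j <;>
      simp_all [graph2K2, SimpleGraph.fromRel_adj, hab.symm, hcd.symm,
        mt G.adj_symm hac, mt G.adj_symm had, mt G.adj_symm hbc, mt G.adj_symm hbd]

lemma IndFree.false_of_graphK5e (h : IndFree graphK5e G) {x y a b c : V}
    (hxy : x ≠ y) (hxy' : ¬G.Adj x y)
    (hab : G.Adj a b) (hac : G.Adj a c) (hbc : G.Adj b c)
    (hxa : G.Adj x a) (hxb : G.Adj x b) (hxc : G.Adj x c)
    (hya : G.Adj y a) (hyb : G.Adj y b) (hyc : G.Adj y c) : False := by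
  refine h.elim ⟨⟨![x, y, a, b, c], ?_⟩, ?_⟩
  · intro i j hij
    fin_cases i <;> fin_cases j <;>
      simp_all [hxa.ne, hxb.ne, hxc.ne, hya.ne, hyb.ne, hyc.ne, hab.ne, hac.ne, hbc.ne,
        hxa.ne', hxb.ne', hxc.ne', hya.ne', hyb.ne', hyc.ne', hab.ne', hac.ne', hbc.ne']
  · intro i j
    change G.Adj (![x, y, a, b, c] i) (![x, y, a, b, c] j) ↔ _
    fin_cases i <;> fin_cases j <;>
      simp_all [graphK5e, SimpleGraph.fromRel_adj, hab.symm, hac.symm, hbc.symm,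
        hxa.symm, hxb.symm, hxc.symm, hya.symm, hyb.symm, hyc.symm, G.adj_comm x y]

lemma SimpleGraph.isNClique_map_topEmbedding {W : Type*} (v : (⊤ : SimpleGraph W) ↪g G)
    (I : Finset W) : G.IsNClique #I (I.map v.toEmbedding) := by
  refine ⟨?_, card_map _⟩
  rw [coe_map]
  rintro _ ⟨i, -, rfl⟩ _ ⟨j, -, rfl⟩ hne
  exact v.map_adj_iff.2 fun h => hne (h ▸ rfl)

section CliqueTrace

variable [DecidableRel G.Adj] {k : ℕ} (v : (⊤ : SimpleGraph (Fin k)) ↪g G)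

def cliqueTrace (u : V) : Finset (Fin k) := {i | G.Adj u (v i)}

variable {v}

@[simp]
lemma mem_cliqueTrace {u : V} {i : Fin k} : i ∈ cliqueTrace v u ↔ G.Adj u (v i) := by
  simp [cliqueTrace]

lemma cliqueTrace_ne_univ (hmax : G.CliqueFree (k + 1)) (u : V) : cliqueTrace v u ≠ univ := by
  classical
  intro htop
  have hQ := SimpleGraph.isNClique_map_topEmbedding v univ
  rw [card_univ, Fintype.card_fin] at hQ
  refine hmax (insert u _) (hQ.insert fun b hb => ?_)
  obtain ⟨i, -, rfl⟩ := mem_map.1 hb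
  exact mem_cliqueTrace.1 (htop ▸ mem_univ i)

lemma card_cliqueTrace_le_two (hK5e : IndFree graphK5e G) (hmax : G.CliqueFree (k + 1))
    {u : V} (hu : u ∉ Set.range v) : #(cliqueTrace v u) ≤ 2 := by
  by_contra! htrace
  obtain ⟨j, hj⟩ : ∃ j, j ∉ cliqueTrace v u := by
    simpa [eq_univ_iff_forall] using cliqueTrace_ne_univ hmax u
  obtain ⟨a, b, c, ha, hb, hc, hab, hac, hbc⟩ := two_lt_card_iff.1 htrace
  have hja : j ≠ a := fun h => hj (h ▸ ha)
  have hjb : j ≠ b := fun h => hj (h ▸ hb)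
  have hjc : j ≠ c := fun h => hj (h ▸ hc)
  rw [mem_cliqueTrace] at ha hb hc hj
  exact hK5e.false_of_graphK5e (fun h => hu ⟨j, h.symm⟩) hj
    (v.map_adj_iff.2 hab) (v.map_adj_iff.2 hac) (v.map_adj_iff.2 hbc) ha hb hc
    (v.map_adj_iff.2 hja) (v.map_adj_iff.2 hjb) (v.map_adj_iff.2 hjc)

lemma le_card_cliqueTrace_union (h2K2 : IndFree graph2K2 G) {u w : V} (huw : G.Adj u w) :
    k ≤ #(cliqueTrace v u ∪ cliqueTrace v w) + 1 := by
  by_contra! hcard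
  have hmissed : 1 < #(univ \ (cliqueTrace v u ∪ cliqueTrace v w)) := by
    rw [card_sdiff_of_subset (subset_univ _), card_univ, Fintype.card_fin]
    omega
  obtain ⟨i, hi, j, hj, hij⟩ := one_lt_card.1 hmissed
  simp only [mem_sdiff, mem_univ, mem_union, mem_cliqueTrace, true_and, not_or] at hi hj
  exact h2K2.false_of_graph2K2 huw (v.map_adj_iff.2 hij) hi.1 hj.1 hi.2 hj.2

lemma card_cliqueTrace_inter_add_two_le (hmax : G.CliqueFree (k + 1)) {u w : V}
    (huw : G.Adj u w) : #(cliqueTrace v u ∩ cliqueTrace v w) + 2 ≤ k := by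
  classical
  by_contra! hcard
  set I := cliqueTrace v u ∩ cliqueTrace v w
  have hw : G.IsNClique (#I + 1) (insert w (I.map v.toEmbedding)) := by
    refine (SimpleGraph.isNClique_map_topEmbedding v I).insert fun b hb => ?_
    obtain ⟨i, hi, rfl⟩ := mem_map.1 hb
    exact mem_cliqueTrace.1 (mem_inter.1 hi).2
  have hu : G.IsNClique (#I + 1 + 1) (insert u (insert w (I.map v.toEmbedding))) := by
    refine hw.insert fun b hb => ?_
    obtain rfl | hb := mem_insert.1 hb
    · exact huw
    obtain ⟨i, hi, rfl⟩ := mem_map.1 hb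
    exact mem_cliqueTrace.1 (mem_inter.1 hi).1
  exact hmax.mono (by omega) _ hu

end CliqueTrace

/-- The constraints met by the traces of two adjacent vertices outside a maximum `k`-clique. -/
def IsAdjTracePair {k : ℕ} (S T : Finset (Fin k)) : Prop :=
  #S ≤ 2 ∧ #T ≤ 2 ∧ k ≤ #(S ∪ T) + 1 ∧ #(S ∩ T) + 2 ≤ k

instance {k : ℕ} : DecidableRel (@IsAdjTracePair k) :=
  fun _ _ => inferInstanceAs (Decidable (_ ∧ _ ∧ _ ∧ _))

lemma not_isAdjTracePair_of_six_le {k : ℕ} (hk : 6 ≤ k) (S T : Finset (Fin k)) :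
    ¬IsAdjTracePair S T := by
  rintro ⟨hS, hT, hunion, -⟩
  have := card_union_le S T
  omega

/-- Colours `f S` for the vertices with trace `S`, compatible with colouring the `i`-th clique
vertex by `i`. -/
structure IsTraceColoring {k : ℕ} (n : ℕ) (f : Finset (Fin k) → ℕ) : Prop where
  k_le : k ≤ n
  lt : ∀ S, #S ≤ 2 → f S < n
  ne_of_mem : ∀ S, #S ≤ 2 → ∀ i ∈ S, f S ≠ i
  ne_of_isAdjTracePair : ∀ S T, IsAdjTracePair S T → f S ≠ f T

lemma colorable_of_isTraceColoring [DecidableRel G.Adj] (h2K2 : IndFree graph2K2 G)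
    (hK5e : IndFree graphK5e G) {k n : ℕ} (v : (⊤ : SimpleGraph (Fin k)) ↪g G)
    (hmax : G.CliqueFree (k + 1)) {f : Finset (Fin k) → ℕ} (hf : IsTraceColoring n f) :
    G.Colorable n := by
  let c : V → ℕ := Function.extend v (fun i => i) fun u => f (cliqueTrace v u)
  have c_clique (i : Fin k) : c (v i) = i := v.injective.extend_apply _ _ i
  have c_out {u : V} (hu : u ∉ Set.range v) : c u = f (cliqueTrace v u) :=
    Function.extend_apply' _ _ u hu
  rw [SimpleGraph.colorable_iff_exists_bdd_nat_coloring]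
  refine ⟨⟨c, fun {x y} hxy => ?_⟩, fun x => ?_⟩
  · by_cases hx : x ∈ Set.range v <;> by_cases hy : y ∈ Set.range v
    · obtain ⟨i, rfl⟩ := hx
      obtain ⟨j, rfl⟩ := hy
      rw [c_clique, c_clique]
      exact fun h => hxy.ne (congrArg v (Fin.ext h))
    · obtain ⟨i, rfl⟩ := hx
      rw [c_clique, c_out hy]
      exact (hf.ne_of_mem _ (card_cliqueTrace_le_two hK5e hmax hy) i
        (mem_cliqueTrace.2 hxy.symm)).symm
    · obtain ⟨j, rfl⟩ := hy
      rw [c_clique, c_out hx]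
      exact hf.ne_of_mem _ (card_cliqueTrace_le_two hK5e hmax hx) j (mem_cliqueTrace.2 hxy)
    · rw [c_out hx, c_out hy]
      exact hf.ne_of_isAdjTracePair _ _ ⟨card_cliqueTrace_le_two hK5e hmax hx,
        card_cliqueTrace_le_two hK5e hmax hy, le_card_cliqueTrace_union h2K2 hxy,
        card_cliqueTrace_inter_add_two_le hmax hxy⟩
  · change c x < n
    by_cases hx : x ∈ Set.range v
    · obtain ⟨i, rfl⟩ := hx
      rw [c_clique]
      exact i.isLt.trans_le hf.k_le
    · rw [c_out hx]
      exact hf.lt _ (card_cliqueTrace_le_two hK5e hmax hx)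

/-- One table serves every `k ≤ 5`: `∅` takes `3`, the 2-subsets of `{0, 1, 2}` take the colour
of the third index, `{a}` and `{a, 3}` take `4 + a`, and the pairwise intersecting `{a, 4}` share
`7`. Here `b` is the largest index of `S` and, when `#S = 2`, `a` is the other one. -/
def traceColor {k : ℕ} (S : Finset (Fin k)) : ℕ :=
  let b := S.sup Fin.val
  let a := (∑ i ∈ S, i.val) - b
  match #S with
  | 0 => 3
  | 1 => 4 + b
  | _ => if b ≤ 2 then 3 - a - b else if b = 3 then 4 + a else 7

lemma traceColor_spec {k : ℕ} (hk : k < 6) : ∀ S T : Finset (Fin k), #S ≤ 2 →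
    traceColor S < k + 4 ∧ (∀ i ∈ S, traceColor S ≠ i) ∧
      (IsAdjTracePair S T → traceColor S ≠ traceColor T) := by
  interval_cases k <;> decide

lemma exists_isTraceColoring (k : ℕ) : ∃ f : Finset (Fin k) → ℕ, IsTraceColoring (k + 4) f := by
  rcases lt_or_ge k 6 with hk | hk
  · exact ⟨traceColor, ⟨by omega, fun S hS => (traceColor_spec hk S ∅ hS).1,
      fun S hS => (traceColor_spec hk S ∅ hS).2.1,
      fun S T hST => (traceColor_spec hk S T hST.1).2.2 hST⟩⟩
  · exact ⟨fun _ => k, ⟨by omega, fun _ _ => by omega, fun _ _ i _ => i.isLt.ne',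
      fun S T => (not_isAdjTracePair_of_six_le hk S T).elim⟩⟩

end TraceColoring

/-- Every `(2K₂, K₅ - e)`-free graph `G` satisfies `χ(G) ≤ ω(G) + 4`. -/
theorem stmt9 {V : Type*} [Fintype V] (G : SimpleGraph V)
    (h1 : IndFree graph2K2 G) (h2 : IndFree graphK5e G) :
    G.chromaticNumber ≤ ((G.cliqueNum + 4 : ℕ) : ℕ∞) := by
  classical
  obtain ⟨Q, hQ⟩ := G.exists_isNClique_cliqueNum
  have hmax : G.CliqueFree (G.cliqueNum + 1) := fun t ht => by
    have := SimpleGraph.IsClique.card_le_cliqueNum (tc := ht.isClique)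
    have := ht.card_eq
    omega
  obtain ⟨f, hf⟩ := exists_isTraceColoring G.cliqueNum
  exact (colorable_of_isTraceColoring h1 h2 (SimpleGraph.topEmbeddingOfNotCliqueFree
    hQ.not_cliqueFree) hmax hf).chromaticNumber_le
end
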